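/- Let F : M₁ × M₂ → R^r be a smooth submersion between Riemannian manifolds with dimensions n₁, n₂ ≥ r, let Σ = F⁻¹(0) with projections π₁, π₂ onto the factors, and let x ∈ Σ. Then odet(d_x π₂) = 0 if and only if odet(∂₁F(x)) = 0, and moreover odet(d_x π₁)·odet(∂₁F(x)) = odet(d_x π₂)·odet(∂₂F(x)). -/

import Mathlib

/-!
Write `B = (F₁, F₂) : V₁ ⊕ V₂ → ℝʳ`, so that `T = ker B`, and let `A` be one of the two coordinate
projections, a coisometry. The orthogonal projection onto `ker B` is `1 - B* (B B*)⁻¹ B`, hence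
`(A|_T)(A|_T)* = 1 - C* (B B*)⁻¹ C` with `C = B A*`, and the Schur complement (Sylvester)
determinant identity gives `det((A|_T)(A|_T)*) · det(B B*) = det(B B* - C C*)`. For the two
projections `C` is `F₁`, resp. `F₂`, and `B B* = F₁ F₁* + F₂ F₂*`, so
`odet dπ₁ · odet B = odet F₂` and `odet dπ₂ · odet B = odet F₁`, where `odet B ≠ 0` since `B` is
onto. Both claims follow at once.
-/

noncomputable def odet {V W : Type*} [NormedAddCommGroup V] [InnerProductSpace ℝ V]
    [NormedAddCommGroup W] [InnerProductSpace ℝ W]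
    [FiniteDimensional ℝ V] [FiniteDimensional ℝ W] (L : V →ₗ[ℝ] W) : ℝ :=
  Real.sqrt (LinearMap.det (L ∘ₗ LinearMap.adjoint L))

theorem LinearMap.det_id_sub_comp_comm {R V W : Type*} [CommRing R]
    [AddCommGroup V] [Module R V] [Module.Free R V] [Module.Finite R V]
    [AddCommGroup W] [Module R W] [Module.Free R W] [Module.Finite R W]
    (f : V →ₗ[R] W) (g : W →ₗ[R] V) :
    LinearMap.det (LinearMap.id - g ∘ₗ f) = LinearMap.det (LinearMap.id - f ∘ₗ g) := by
  classical
  let bV := Module.Free.chooseBasis R V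
  let bW := Module.Free.chooseBasis R W
  rw [← LinearMap.det_toMatrix bV, ← LinearMap.det_toMatrix bW]
  simp only [map_sub, LinearMap.toMatrix_id, LinearMap.toMatrix_comp bV bW bV,
    LinearMap.toMatrix_comp bW bV bW]
  exact Matrix.det_one_sub_mul_comm _ _

theorem LinearEquiv.det_sub_comp {R V W : Type*} [CommRing R]
    [AddCommGroup V] [Module R V] [Module.Free R V] [Module.Finite R V]
    [AddCommGroup W] [Module R W] [Module.Free R W] [Module.Finite R W]
    (G : W ≃ₗ[R] W) (C : V →ₗ[R] W) (D : W →ₗ[R] V) :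
    LinearMap.det ((G : W →ₗ[R] W) - C ∘ₗ D) =
      LinearMap.det (G : W →ₗ[R] W) *
        LinearMap.det (LinearMap.id - D ∘ₗ G.symm ∘ₗ C) := by
  have hfactor :
      (G : W →ₗ[R] W) - C ∘ₗ D = G ∘ₗ (LinearMap.id - (G.symm ∘ₗ C) ∘ₗ D) := by
    ext; simp
  rw [hfactor, LinearMap.det_comp, LinearMap.det_id_sub_comp_comm]

section InnerProduct

variable {E V W : Type*}
  [NormedAddCommGroup E] [InnerProductSpace ℝ E] [FiniteDimensional ℝ E]
  [NormedAddCommGroup V] [InnerProductSpace ℝ V] [FiniteDimensional ℝ V]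
  [NormedAddCommGroup W] [InnerProductSpace ℝ W] [FiniteDimensional ℝ W]

theorem LinearMap.det_comp_adjoint_eq_normDet_adjoint_sq (L : V →ₗ[ℝ] W) :
    LinearMap.det (L ∘ₗ L.adjoint) = L.adjoint.normDet ^ 2 := by
  simpa using (LinearMap.normDet_sq L.adjoint).symm

theorem odet_eq_normDet_adjoint (L : V →ₗ[ℝ] W) : odet L = L.adjoint.normDet := by
  rw [odet, L.det_comp_adjoint_eq_normDet_adjoint_sq, Real.sqrt_sq L.adjoint.normDet_nonneg]

theorem odet_ne_zero_of_surjective {B : E →ₗ[ℝ] W} (hB : Function.Surjective B) :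
    odet B ≠ 0 := by
  rw [odet_eq_normDet_adjoint, Ne, LinearMap.normDet_eq_zero_iff_ker_ne_bot, not_not,
    ← LinearMap.orthogonal_range, LinearMap.range_eq_top.mpr hB, Submodule.top_orthogonal_eq_bot]

theorem LinearMap.bijective_comp_adjoint_of_surjective {B : E →ₗ[ℝ] W}
    (hB : Function.Surjective B) : Function.Bijective (B ∘ₗ B.adjoint) := by
  have hsurj : Function.Surjective (B ∘ₗ B.adjoint) := by
    rw [← LinearMap.range_eq_top, LinearMap.range_self_comp_adjoint, LinearMap.range_eq_top]
    exact hB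
  exact ⟨LinearMap.injective_iff_surjective.mpr hsurj, hsurj⟩

theorem LinearMap.subtype_comp_adjoint_ker {B : E →ₗ[ℝ] W} (G : W ≃ₗ[ℝ] W)
    (hG : (G : W →ₗ[ℝ] W) = B ∘ₗ B.adjoint) :
    (LinearMap.ker B).subtype ∘ₗ (LinearMap.ker B).subtype.adjoint =
      LinearMap.id - B.adjoint ∘ₗ G.symm ∘ₗ B := by
  set Q : E →ₗ[ℝ] E := LinearMap.id - B.adjoint ∘ₗ G.symm ∘ₗ B
  have hQ : ∀ x, Q x ∈ LinearMap.ker B := fun x => by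
    have hGx : B (B.adjoint (G.symm (B x))) = G (G.symm (B x)) := by
      rw [← LinearMap.comp_apply B, ← hG, LinearEquiv.coe_coe]
    simp [Q, hGx]
  have hadj : Q.codRestrict _ hQ = (LinearMap.ker B).subtype.adjoint := by
    rw [LinearMap.eq_adjoint_iff]
    rintro x ⟨y, hy⟩
    simp [Q, inner_sub_left, LinearMap.adjoint_inner_left, LinearMap.mem_ker.mp hy]
  rw [← hadj]
  rfl

theorem det_comp_subtype_ker_comp_adjoint_mul_det {A : E →ₗ[ℝ] V}
    (hA : A ∘ₗ A.adjoint = LinearMap.id) {B : E →ₗ[ℝ] W} (hB : Function.Surjective B) :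
    LinearMap.det
        ((A ∘ₗ (LinearMap.ker B).subtype) ∘ₗ (A ∘ₗ (LinearMap.ker B).subtype).adjoint) *
        LinearMap.det (B ∘ₗ B.adjoint) =
      LinearMap.det (B ∘ₗ B.adjoint - (B ∘ₗ A.adjoint) ∘ₗ (B ∘ₗ A.adjoint).adjoint) := by
  set G := LinearEquiv.ofBijective _ (LinearMap.bijective_comp_adjoint_of_surjective hB)
  have hG : (G : W →ₗ[ℝ] W) = B ∘ₗ B.adjoint := rfl
  have hproj : (A ∘ₗ (LinearMap.ker B).subtype) ∘ₗ (A ∘ₗ (LinearMap.ker B).subtype).adjoint =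
      LinearMap.id - (B ∘ₗ A.adjoint).adjoint ∘ₗ G.symm ∘ₗ (B ∘ₗ A.adjoint) := by
    rw [LinearMap.adjoint_comp, LinearMap.comp_assoc,
      ← LinearMap.comp_assoc _ _ (LinearMap.ker B).subtype, LinearMap.subtype_comp_adjoint_ker G hG,
      LinearMap.sub_comp, LinearMap.comp_sub, LinearMap.id_comp, hA, LinearMap.adjoint_comp,
      LinearMap.adjoint_adjoint]
    rfl
  rw [hproj, ← hG, G.det_sub_comp, mul_comm]

theorem odet_comp_subtype_ker_mul_odet {A : E →ₗ[ℝ] V} (hA : A ∘ₗ A.adjoint = LinearMap.id)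
    {B : E →ₗ[ℝ] W} (hB : Function.Surjective B) :
    odet (A ∘ₗ (LinearMap.ker B).subtype) * odet B =
      Real.sqrt
        (LinearMap.det (B ∘ₗ B.adjoint - (B ∘ₗ A.adjoint) ∘ₗ (B ∘ₗ A.adjoint).adjoint)) := by
  rw [odet, odet, ← Real.sqrt_mul, det_comp_subtype_ker_comp_adjoint_mul_det hA hB]
  rw [LinearMap.det_comp_adjoint_eq_normDet_adjoint_sq]
  positivity

end InnerProduct

section ProdL2

variable {V₁ V₂ W : Type*}
  [NormedAddCommGroup V₁] [InnerProductSpace ℝ V₁] [FiniteDimensional ℝ V₁]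
  [NormedAddCommGroup V₂] [InnerProductSpace ℝ V₂] [FiniteDimensional ℝ V₂]
  [NormedAddCommGroup W] [InnerProductSpace ℝ W]

theorem WithLp.adjoint_fstₗ :
    (WithLp.fstₗ 2 ℝ V₁ V₂).adjoint =
      (WithLp.linearEquiv 2 ℝ (V₁ × V₂)).symm.toLinearMap ∘ₗ LinearMap.inl ℝ V₁ V₂ :=
  (LinearMap.eq_adjoint_iff _ _ |>.mpr fun _ _ => by simp).symm

theorem WithLp.adjoint_sndₗ :
    (WithLp.sndₗ 2 ℝ V₁ V₂).adjoint =
      (WithLp.linearEquiv 2 ℝ (V₁ × V₂)).symm.toLinearMap ∘ₗ LinearMap.inr ℝ V₁ V₂ :=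
  (LinearMap.eq_adjoint_iff _ _ |>.mpr fun _ _ => by simp).symm

theorem WithLp.fstₗ_comp_adjoint :
    WithLp.fstₗ 2 ℝ V₁ V₂ ∘ₗ (WithLp.fstₗ 2 ℝ V₁ V₂).adjoint = LinearMap.id := by
  ext; simp [WithLp.adjoint_fstₗ]

theorem WithLp.sndₗ_comp_adjoint :
    WithLp.sndₗ 2 ℝ V₁ V₂ ∘ₗ (WithLp.sndₗ 2 ℝ V₁ V₂).adjoint = LinearMap.id := by
  ext; simp [WithLp.adjoint_sndₗ]

variable (F₁ : V₁ →ₗ[ℝ] W) (F₂ : V₂ →ₗ[ℝ] W)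

theorem coprod_comp_linearEquiv_comp_adjoint_fstₗ :
    (F₁.coprod F₂ ∘ₗ (WithLp.linearEquiv 2 ℝ (V₁ × V₂)).toLinearMap) ∘ₗ
      (WithLp.fstₗ 2 ℝ V₁ V₂).adjoint = F₁ := by
  ext; simp [WithLp.adjoint_fstₗ]

theorem coprod_comp_linearEquiv_comp_adjoint_sndₗ :
    (F₁.coprod F₂ ∘ₗ (WithLp.linearEquiv 2 ℝ (V₁ × V₂)).toLinearMap) ∘ₗ
      (WithLp.sndₗ 2 ℝ V₁ V₂).adjoint = F₂ := by
  ext; simp [WithLp.adjoint_sndₗ]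

theorem coprod_comp_linearEquiv_comp_adjoint [FiniteDimensional ℝ W] :
    (F₁.coprod F₂ ∘ₗ (WithLp.linearEquiv 2 ℝ (V₁ × V₂)).toLinearMap) ∘ₗ
      (F₁.coprod F₂ ∘ₗ (WithLp.linearEquiv 2 ℝ (V₁ × V₂)).toLinearMap).adjoint =
      F₁ ∘ₗ F₁.adjoint + F₂ ∘ₗ F₂.adjoint := by
  set B := F₁.coprod F₂ ∘ₗ (WithLp.linearEquiv 2 ℝ (V₁ × V₂)).toLinearMap
  have hsplit : B = F₁ ∘ₗ WithLp.fstₗ 2 ℝ V₁ V₂ + F₂ ∘ₗ WithLp.sndₗ 2 ℝ V₁ V₂ := by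
    ext; simp [B]
  have hadj : B.adjoint = (WithLp.fstₗ 2 ℝ V₁ V₂).adjoint ∘ₗ F₁.adjoint +
      (WithLp.sndₗ 2 ℝ V₁ V₂).adjoint ∘ₗ F₂.adjoint := by
    rw [hsplit, map_add, LinearMap.adjoint_comp, LinearMap.adjoint_comp]
  rw [hadj, LinearMap.comp_add, ← LinearMap.comp_assoc, ← LinearMap.comp_assoc,
    coprod_comp_linearEquiv_comp_adjoint_fstₗ, coprod_comp_linearEquiv_comp_adjoint_sndₗ]

end ProdL2

theorem odet_projection_eq_odet_partial_general
    {V₁ V₂ : Type*} [NormedAddCommGroup V₁] [InnerProductSpace ℝ V₁]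
    [NormedAddCommGroup V₂] [InnerProductSpace ℝ V₂]
    [FiniteDimensional ℝ V₁] [FiniteDimensional ℝ V₂]
    (r : ℕ)
    (F₁ : V₁ →ₗ[ℝ] EuclideanSpace ℝ (Fin r)) (F₂ : V₂ →ₗ[ℝ] EuclideanSpace ℝ (Fin r))
    (hsub : Function.Surjective (F₁.coprod F₂))
    (T : Submodule ℝ (WithLp 2 (V₁ × V₂)))
    (hT : T = LinearMap.ker
      ((F₁.coprod F₂) ∘ₗ (WithLp.linearEquiv 2 ℝ (V₁ × V₂)).toLinearMap))
    (dπ₁ : T →ₗ[ℝ] V₁) (dπ₂ : T →ₗ[ℝ] V₂)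
    (hπ₁ : dπ₁ = (LinearMap.fst ℝ V₁ V₂) ∘ₗ
      (WithLp.linearEquiv 2 ℝ (V₁ × V₂)).toLinearMap ∘ₗ T.subtype)
    (hπ₂ : dπ₂ = (LinearMap.snd ℝ V₁ V₂) ∘ₗ
      (WithLp.linearEquiv 2 ℝ (V₁ × V₂)).toLinearMap ∘ₗ T.subtype) :
    (odet dπ₂ = 0 ↔ odet F₁ = 0) ∧ odet dπ₁ * odet F₁ = odet dπ₂ * odet F₂ := by
  set B := F₁.coprod F₂ ∘ₗ (WithLp.linearEquiv 2 ℝ (V₁ × V₂)).toLinearMap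
  subst hT
  obtain rfl : dπ₁ = WithLp.fstₗ 2 ℝ V₁ V₂ ∘ₗ (LinearMap.ker B).subtype := hπ₁
  obtain rfl : dπ₂ = WithLp.sndₗ 2 ℝ V₁ V₂ ∘ₗ (LinearMap.ker B).subtype := hπ₂
  have hB : Function.Surjective B := hsub.comp (WithLp.linearEquiv 2 ℝ (V₁ × V₂)).surjective
  have h₁ : odet (WithLp.fstₗ 2 ℝ V₁ V₂ ∘ₗ (LinearMap.ker B).subtype) * odet B = odet F₂ := by
    rw [odet_comp_subtype_ker_mul_odet WithLp.fstₗ_comp_adjoint hB,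
      coprod_comp_linearEquiv_comp_adjoint, coprod_comp_linearEquiv_comp_adjoint_fstₗ,
      add_sub_cancel_left, odet]
  have h₂ : odet (WithLp.sndₗ 2 ℝ V₁ V₂ ∘ₗ (LinearMap.ker B).subtype) * odet B = odet F₁ := by
    rw [odet_comp_subtype_ker_mul_odet WithLp.sndₗ_comp_adjoint hB,
      coprod_comp_linearEquiv_comp_adjoint, coprod_comp_linearEquiv_comp_adjoint_sndₗ,
      add_sub_cancel_right, odet]
  refine ⟨?_, ?_⟩
  · rw [← h₂, mul_eq_zero, or_iff_left (odet_ne_zero_of_surjective hB)]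
  · rw [← h₁, ← h₂]; ring

/-- Pointwise content of the double-fibration lemma: let `∂₁F : T₁ → ℝ^r`, `∂₂F : T₂ → ℝ^r`
be the partial differentials at a point `x ∈ Σ = F⁻¹(0)` of a submersion `F`, so that the
tangent space `T` of `Σ` at `x` is the kernel of `(v₁,v₂) ↦ ∂₁F v₁ + ∂₂F v₂` inside the
orthogonal direct sum `T₁ ⊕ T₂` (with the restricted product metric), and let
`dπ₁ : T → T₁`, `dπ₂ : T → T₂` be the restricted projections. Then `odet(dπ₂) = 0` iff
`odet(∂₁F) = 0`, and `odet(dπ₁)·odet(∂₁F) = odet(dπ₂)·odet(∂₂F)`. -/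
theorem odet_projection_eq_odet_partial
    {V₁ V₂ : Type*} [NormedAddCommGroup V₁] [InnerProductSpace ℝ V₁]
    [NormedAddCommGroup V₂] [InnerProductSpace ℝ V₂]
    [FiniteDimensional ℝ V₁] [FiniteDimensional ℝ V₂]
    (r : ℕ) (hr1 : r ≤ Module.finrank ℝ V₁) (hr2 : r ≤ Module.finrank ℝ V₂)
    (F₁ : V₁ →ₗ[ℝ] EuclideanSpace ℝ (Fin r)) (F₂ : V₂ →ₗ[ℝ] EuclideanSpace ℝ (Fin r))
    (hsub : Function.Surjective (F₁.coprod F₂))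
    (T : Submodule ℝ (WithLp 2 (V₁ × V₂)))
    (hT : T = LinearMap.ker
      ((F₁.coprod F₂) ∘ₗ (WithLp.linearEquiv 2 ℝ (V₁ × V₂)).toLinearMap))
    (dπ₁ : T →ₗ[ℝ] V₁) (dπ₂ : T →ₗ[ℝ] V₂)
    (hπ₁ : dπ₁ = (LinearMap.fst ℝ V₁ V₂) ∘ₗ
      (WithLp.linearEquiv 2 ℝ (V₁ × V₂)).toLinearMap ∘ₗ T.subtype)
    (hπ₂ : dπ₂ = (LinearMap.snd ℝ V₁ V₂) ∘ₗ
      (WithLp.linearEquiv 2 ℝ (V₁ × V₂)).toLinearMap ∘ₗ T.subtype) :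
    (odet dπ₂ = 0 ↔ odet F₁ = 0) ∧ odet dπ₁ * odet F₁ = odet dπ₂ * odet F₂ :=
  odet_projection_eq_odet_partial_general r F₁ F₂ hsub T hT dπ₁ dπ₂ hπ₁ hπ₂
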